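/- Argmin equality for generalized Riesz regression: under the assumptions of the previous identity, if α₀ ∈ 𝒜 then α₀ minimizes BR_g(α) := E[−g(α(X)) + g′(α(X))α(X) − m(W, g′∘α)] over 𝒜, and if g is strictly convex any minimizer equals α₀ almost everywhere (with respect to the distribution of X). -/

import Mathlib

/-!
Through the Riesz representation, `E[m(W, g' ∘ β)] = E[α₀(X) g'(β(X))]`, and the objective
becomes `BR_g(β) = BR_g(α₀) + E[D_g(α₀(X), β(X))]` with `D_g` the Bregman divergence of `g`.
Convexity makes `D_g ≥ 0`, so `α₀` is a minimizer; for another minimizer `β` the expected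
divergence vanishes, hence `D_g(α₀(X), β(X)) = 0` almost surely, which under strict convexity
forces `β(X) = α₀(X)`.
-/

open MeasureTheory

noncomputable def bregmanDiv (g : ℝ → ℝ) (a b : ℝ) : ℝ := g a - g b - deriv g b * (a - b)

theorem ConvexOn.bregmanDiv_nonneg {S : Set ℝ} {g : ℝ → ℝ} (hgc : ConvexOn ℝ S g) {a b : ℝ}
    (ha : a ∈ S) (hb : b ∈ S) (hgb : DifferentiableAt ℝ g b) : 0 ≤ bregmanDiv g a b := by
  unfold bregmanDiv
  rcases lt_trichotomy a b with hab | rfl | hab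
  · have hslope := hgc.slope_le_deriv ha hb hab hgb
    rw [slope_def_field, div_le_iff₀ (sub_pos.2 hab)] at hslope
    linarith
  · simp
  · have hslope := hgc.deriv_le_slope hb ha hab hgb
    rw [slope_def_field, le_div_iff₀ (sub_pos.2 hab)] at hslope
    linarith

theorem StrictConvexOn.bregmanDiv_pos {S : Set ℝ} {g : ℝ → ℝ} (hgc : StrictConvexOn ℝ S g)
    {a b : ℝ} (ha : a ∈ S) (hb : b ∈ S) (hgb : DifferentiableAt ℝ g b) (hab : a ≠ b) :
    0 < bregmanDiv g a b := by
  unfold bregmanDiv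
  rcases hab.lt_or_gt with hab | hab
  · have hslope := hgc.slope_lt_deriv ha hb hab hgb
    rw [slope_def_field, div_lt_iff₀ (sub_pos.2 hab)] at hslope
    linarith
  · have hslope := hgc.deriv_lt_slope hb ha hab hgb
    rw [slope_def_field, lt_div_iff₀ (sub_pos.2 hab)] at hslope
    linarith

section

variable {Ω 𝒳 : Type*} [MeasurableSpace Ω] {μ : Measure Ω}

/-- The tangent lines of `g` at `t` and at `0` give
`-g 0 ≤ -g t + g' t * t ≤ -g 0 - g' 0 * t + g' t * t`. -/
theorem ConvexOn.integrable_neg_add_deriv_mul [IsFiniteMeasure μ] {g : ℝ → ℝ}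
    (hg : Differentiable ℝ g) (hgc : ConvexOn ℝ Set.univ g) {f : Ω → ℝ} (hf : Integrable f μ)
    (hfg : Integrable (fun ω => deriv g (f ω) * f ω) μ) :
    Integrable (fun ω => -g (f ω) + deriv g (f ω) * f ω) μ := by
  refine integrable_of_le_of_le (g₁ := fun _ => -g 0)
    (g₂ := fun ω => -g 0 - deriv g 0 * f ω + deriv g (f ω) * f ω)
    ((hg.continuous.comp_aestronglyMeasurable hf.1).neg.add hfg.1)
    (Filter.Eventually.of_forall fun ω => ?_) (Filter.Eventually.of_forall fun ω => ?_)
    (integrable_const _) (((integrable_const _).sub (hf.const_mul _)).add hfg)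
  · have := hgc.bregmanDiv_nonneg (Set.mem_univ 0) (Set.mem_univ (f ω)) (hg (f ω))
    simp only [bregmanDiv] at this
    linarith
  · have := hgc.bregmanDiv_nonneg (Set.mem_univ (f ω)) (Set.mem_univ 0) (hg 0)
    simp only [bregmanDiv] at this
    linarith

def IsRieszRepresenter (μ : Measure Ω) (X : Ω → 𝒳) (m : (𝒳 → ℝ) → Ω → ℝ) (α₀ : 𝒳 → ℝ) :
    Prop :=
  ∀ γ : 𝒳 → ℝ, MemLp (fun ω => γ (X ω)) 2 μ → ∫ ω, m γ ω ∂μ = ∫ ω, α₀ (X ω) * γ (X ω) ∂μ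

/-- The objective `BR_g` of generalized Riesz regression. -/
noncomputable def bregmanRieszLoss (μ : Measure Ω) (X : Ω → 𝒳) (m : (𝒳 → ℝ) → Ω → ℝ)
    (g : ℝ → ℝ) (β : 𝒳 → ℝ) : ℝ :=
  ∫ ω, (-g (β (X ω)) + deriv g (β (X ω)) * β (X ω) - m (fun x => deriv g (β x)) ω) ∂μ

def IsBregmanRieszCandidate (μ : Measure Ω) (X : Ω → 𝒳) (m : (𝒳 → ℝ) → Ω → ℝ)
    (g : ℝ → ℝ) (β : 𝒳 → ℝ) : Prop :=
  MemLp (fun ω => β (X ω)) 2 μ ∧ MemLp (fun ω => deriv g (β (X ω))) 2 μ ∧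
    Integrable (fun ω => -g (β (X ω)) + deriv g (β (X ω)) * β (X ω) -
      m (fun x => deriv g (β x)) ω) μ

variable [IsFiniteMeasure μ] {X : Ω → 𝒳} {m : (𝒳 → ℝ) → Ω → ℝ} {α₀ β : 𝒳 → ℝ} {g : ℝ → ℝ}

theorem bregmanRieszLoss_eq_integral (hg : Differentiable ℝ g) (hgc : ConvexOn ℝ Set.univ g)
    (hRiesz : IsRieszRepresenter μ X m α₀) (hα₀ : MemLp (fun ω => α₀ (X ω)) 2 μ)
    (hβ : IsBregmanRieszCandidate μ X m g β) :
    Integrable (fun ω => -g (β (X ω)) + deriv g (β (X ω)) * β (X ω) -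
      α₀ (X ω) * deriv g (β (X ω))) μ ∧
    bregmanRieszLoss μ X m g β = ∫ ω, (-g (β (X ω)) + deriv g (β (X ω)) * β (X ω) -
      α₀ (X ω) * deriv g (β (X ω))) ∂μ := by
  obtain ⟨hβ2, hβ'2, hint⟩ := hβ
  have hconj : Integrable (fun ω => -g (β (X ω)) + deriv g (β (X ω)) * β (X ω)) μ :=
    hgc.integrable_neg_add_deriv_mul hg (hβ2.integrable one_le_two) (hβ'2.integrable_mul hβ2)
  have hm : Integrable (fun ω => m (fun x => deriv g (β x)) ω) μ :=
    (hconj.sub hint).congr (Filter.Eventually.of_forall fun ω => by simp)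
  have hlin : Integrable (fun ω => α₀ (X ω) * deriv g (β (X ω))) μ := hα₀.integrable_mul hβ'2
  refine ⟨hconj.sub hlin, ?_⟩
  rw [bregmanRieszLoss, integral_sub hconj hm, integral_sub hconj hlin,
    hRiesz (fun x => deriv g (β x)) hβ'2]

theorem bregmanRieszLoss_sub_eq_integral_bregmanDiv (hg : Differentiable ℝ g)
    (hgc : ConvexOn ℝ Set.univ g) (hRiesz : IsRieszRepresenter μ X m α₀)
    (hα₀ : IsBregmanRieszCandidate μ X m g α₀) (hβ : IsBregmanRieszCandidate μ X m g β) :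
    Integrable (fun ω => bregmanDiv g (α₀ (X ω)) (β (X ω))) μ ∧
    bregmanRieszLoss μ X m g β - bregmanRieszLoss μ X m g α₀ =
      ∫ ω, bregmanDiv g (α₀ (X ω)) (β (X ω)) ∂μ := by
  obtain ⟨hβint, hβeq⟩ := bregmanRieszLoss_eq_integral hg hgc hRiesz hα₀.1 hβ
  obtain ⟨hαint, hαeq⟩ := bregmanRieszLoss_eq_integral hg hgc hRiesz hα₀.1 hα₀
  have hpointwise : (fun ω => bregmanDiv g (α₀ (X ω)) (β (X ω))) =
      fun ω => (-g (β (X ω)) + deriv g (β (X ω)) * β (X ω) - α₀ (X ω) * deriv g (β (X ω))) -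
        (-g (α₀ (X ω)) + deriv g (α₀ (X ω)) * α₀ (X ω) - α₀ (X ω) * deriv g (α₀ (X ω))) := by
    ext ω
    simp only [bregmanDiv]
    ring
  rw [hpointwise, hβeq, hαeq, integral_sub hβint hαint]
  exact ⟨hβint.sub hαint, rfl⟩

theorem bregmanRieszLoss_le (hg : Differentiable ℝ g) (hgc : ConvexOn ℝ Set.univ g)
    (hRiesz : IsRieszRepresenter μ X m α₀) (hα₀ : IsBregmanRieszCandidate μ X m g α₀)
    (hβ : IsBregmanRieszCandidate μ X m g β) :
    bregmanRieszLoss μ X m g α₀ ≤ bregmanRieszLoss μ X m g β := by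
  have hdiff := (bregmanRieszLoss_sub_eq_integral_bregmanDiv hg hgc hRiesz hα₀ hβ).2
  have hnonneg : 0 ≤ ∫ ω, bregmanDiv g (α₀ (X ω)) (β (X ω)) ∂μ :=
    integral_nonneg fun ω => hgc.bregmanDiv_nonneg (Set.mem_univ _) (Set.mem_univ _) (hg _)
  linarith

theorem ae_eq_of_bregmanRieszLoss_le (hg : Differentiable ℝ g)
    (hgc : StrictConvexOn ℝ Set.univ g) (hRiesz : IsRieszRepresenter μ X m α₀)
    (hα₀ : IsBregmanRieszCandidate μ X m g α₀) (hβ : IsBregmanRieszCandidate μ X m g β)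
    (hle : bregmanRieszLoss μ X m g β ≤ bregmanRieszLoss μ X m g α₀) :
    (fun ω => β (X ω)) =ᵐ[μ] fun ω => α₀ (X ω) := by
  obtain ⟨hint, hdiff⟩ :=
    bregmanRieszLoss_sub_eq_integral_bregmanDiv hg hgc.convexOn hRiesz hα₀ hβ
  have hnonneg : 0 ≤ fun ω => bregmanDiv g (α₀ (X ω)) (β (X ω)) :=
    fun ω => hgc.convexOn.bregmanDiv_nonneg (Set.mem_univ _) (Set.mem_univ _) (hg _)
  have hzero : (fun ω => bregmanDiv g (α₀ (X ω)) (β (X ω))) =ᵐ[μ] 0 := by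
    refine (integral_eq_zero_iff_of_nonneg hnonneg hint).1
      (le_antisymm ?_ (integral_nonneg hnonneg))
    linarith
  filter_upwards [hzero] with ω hω
  by_contra hne
  exact (hgc.bregmanDiv_pos (Set.mem_univ _) (Set.mem_univ _) (hg _) (Ne.symm hne)).ne' hω

end

theorem stmt10_general {Ω 𝒳 : Type*} [MeasurableSpace Ω]
    (μ : Measure Ω) [IsProbabilityMeasure μ]
    (X : Ω → 𝒳) (m : (𝒳 → ℝ) → Ω → ℝ) (α₀ : 𝒳 → ℝ) (g : ℝ → ℝ)
    (hg : Differentiable ℝ g) (hgc : StrictConvexOn ℝ Set.univ g)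
    -- α₀ is the Riesz representer of m
    (hRiesz : ∀ γ : 𝒳 → ℝ, MemLp (fun ω => γ (X ω)) 2 μ →
      ∫ ω, m γ ω ∂μ = ∫ ω, α₀ (X ω) * γ (X ω) ∂μ)
    (𝒜 : Set (𝒳 → ℝ))
    (hmem : α₀ ∈ 𝒜)
    -- all candidates are square integrable with finite objectives
    (h𝒜 : ∀ β ∈ 𝒜, MemLp (fun ω => β (X ω)) 2 μ ∧
      MemLp (fun ω => deriv g (β (X ω))) 2 μ ∧
      Integrable (fun ω => -g (β (X ω)) + deriv g (β (X ω)) * β (X ω) -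
        m (fun x => deriv g (β x)) ω) μ) :
    -- α₀ minimizes BR_g over 𝒜
    (∀ β ∈ 𝒜,
      ∫ ω, (-g (α₀ (X ω)) + deriv g (α₀ (X ω)) * α₀ (X ω) -
        m (fun x => deriv g (α₀ x)) ω) ∂μ ≤
      ∫ ω, (-g (β (X ω)) + deriv g (β (X ω)) * β (X ω) -
        m (fun x => deriv g (β x)) ω) ∂μ) ∧
    -- any minimizer equals α₀ almost everywhere w.r.t. the distribution of X
    (∀ αs ∈ 𝒜,
      (∀ β ∈ 𝒜,
        ∫ ω, (-g (αs (X ω)) + deriv g (αs (X ω)) * αs (X ω) -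
          m (fun x => deriv g (αs x)) ω) ∂μ ≤
        ∫ ω, (-g (β (X ω)) + deriv g (β (X ω)) * β (X ω) -
          m (fun x => deriv g (β x)) ω) ∂μ) →
      (fun ω => αs (X ω)) =ᵐ[μ] fun ω => α₀ (X ω)) :=
  ⟨fun β hβ => bregmanRieszLoss_le hg hgc.convexOn hRiesz (h𝒜 α₀ hmem) (h𝒜 β hβ),
    fun αs hαs hmin =>
      ae_eq_of_bregmanRieszLoss_le hg hgc hRiesz (h𝒜 α₀ hmem) (h𝒜 αs hαs) (hmin α₀ hmem)⟩

/-- Argmin equality for generalized Riesz regression: if α₀ ∈ 𝒜 then α₀ minimizes the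
feasible Bregman objective BR_g over 𝒜, and (by strict convexity of g) any minimizer
equals α₀ almost everywhere with respect to the distribution of X. -/
theorem stmt10 {Ω 𝒳 : Type*} [MeasurableSpace Ω] [MeasurableSpace 𝒳]
    (μ : Measure Ω) [IsProbabilityMeasure μ]
    (X : Ω → 𝒳) (m : (𝒳 → ℝ) → Ω → ℝ) (α₀ : 𝒳 → ℝ) (g : ℝ → ℝ)
    (hg : Differentiable ℝ g) (hgc : StrictConvexOn ℝ Set.univ g)
    -- α₀ is the Riesz representer of m
    (hRiesz : ∀ γ : 𝒳 → ℝ, MemLp (fun ω => γ (X ω)) 2 μ →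
      ∫ ω, m γ ω ∂μ = ∫ ω, α₀ (X ω) * γ (X ω) ∂μ)
    (𝒜 : Set (𝒳 → ℝ))
    (hmem : α₀ ∈ 𝒜)
    -- all candidates are square integrable with finite objectives
    (h𝒜 : ∀ β ∈ 𝒜, MemLp (fun ω => β (X ω)) 2 μ ∧
      MemLp (fun ω => deriv g (β (X ω))) 2 μ ∧
      Integrable (fun ω => -g (β (X ω)) + deriv g (β (X ω)) * β (X ω) -
        m (fun x => deriv g (β x)) ω) μ) :
    -- α₀ minimizes BR_g over 𝒜
    (∀ β ∈ 𝒜,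
      ∫ ω, (-g (α₀ (X ω)) + deriv g (α₀ (X ω)) * α₀ (X ω) -
        m (fun x => deriv g (α₀ x)) ω) ∂μ ≤
      ∫ ω, (-g (β (X ω)) + deriv g (β (X ω)) * β (X ω) -
        m (fun x => deriv g (β x)) ω) ∂μ) ∧
    -- any minimizer equals α₀ almost everywhere w.r.t. the distribution of X
    (∀ αs ∈ 𝒜,
      (∀ β ∈ 𝒜,
        ∫ ω, (-g (αs (X ω)) + deriv g (αs (X ω)) * αs (X ω) -
          m (fun x => deriv g (αs x)) ω) ∂μ ≤
        ∫ ω, (-g (β (X ω)) + deriv g (β (X ω)) * β (X ω) -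
          m (fun x => deriv g (β x)) ω) ∂μ) →
      (fun ω => αs (X ω)) =ᵐ[μ] fun ω => α₀ (X ω)) :=
  stmt10_general μ X m α₀ g hg hgc hRiesz 𝒜 hmem h𝒜
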